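/- arXiv:2408.02433 — 3 statements merged into one kernel-verified Lean document; each statement's English description precedes it below -/
import Mathlib

section
/- Discrete marginal optimality: let x_1,...,x_n ∈ ℝ^d be distinct, μ = (1/n)Σ_i δ_{x_i}, and let π = (1/n)Σ_{ij} π_{ij} δ_{(x_i,y_j)} ∈ Π(μ) with Σ_j π_{ij} = 1 for each i, y_1,...,y_n ∈ ℝ^m. Define J(π) = ∫∫ c dπ dπ with c continuous, bounded, nonnegative, and symmetric (c(x,x',y,y') = c(x',x,y',y)). Define J_π(y|x) = ∫ c(x,x',y,y') dπ(x',y'). If π_{ij} > 0 and there exists ỹ with J_π(ỹ|x_i) < J_π(y_j|x_i), then for sufficiently large n (more precisely, when the gap (π_{ij}/n)·2(J_π(y_j|x_i) - J_π(ỹ|x_i)) exceeds (π_{ij}/n)²·|c(x_i,x_i,y_j,y_j) - 2c(x_i,x_i,ỹ,y_j) + c(x_i,x_i,ỹ,ỹ)|), the plan π̃ = π + (π_{ij}/n)(δ_{(x_i,ỹ)} - δ_{(x_i,y_j)}) satisfies π̃ ∈ Π(μ) and J(π̃) < J(π). -/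
open MeasureTheory
open scoped ENNReal

lemma map_finset_sum' {α β : Type*} [MeasurableSpace α] [MeasurableSpace β] {ι : Type*}
    (s : Finset ι) (μ : ι → Measure α) {f : α → β} (hf : Measurable f) :
    (∑ i ∈ s, μ i).map f = ∑ i ∈ s, (μ i).map f := by
  classical
  induction s using Finset.induction_on with
  | empty => simp
  | insert _ _ h ih => simp [Finset.sum_insert h, Measure.map_add _ _ hf, ih]

/-- Discrete marginal optimality: moving mass at `(x_i, y_j)` to a strictly better marginal
location `ỹ` strictly decreases the energy once the linear gain dominates the quadratic term,
and the perturbed plan stays in `Π(μ)`. -/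
theorem stmt11 {d m n : ℕ} (hn : 0 < n)
    (x : Fin n → EuclideanSpace ℝ (Fin d)) (hx : Function.Injective x)
    (y : Fin n → EuclideanSpace ℝ (Fin m))
    (w : Fin n → Fin n → ℝ) (hw : ∀ i j, 0 ≤ w i j) (hrow : ∀ i, ∑ j, w i j = 1)
    (c : EuclideanSpace ℝ (Fin d) × EuclideanSpace ℝ (Fin m) →
         EuclideanSpace ℝ (Fin d) × EuclideanSpace ℝ (Fin m) → ℝ)
    (hc_cont : Continuous (Function.uncurry c))
    (hc_bdd : ∃ C : ℝ, ∀ p q, |c p q| ≤ C)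
    (hc_nonneg : ∀ p q, 0 ≤ c p q)
    (hc_symm : ∀ p q, c p q = c q p)
    (π : Measure (EuclideanSpace ℝ (Fin d) × EuclideanSpace ℝ (Fin m)))
    (hπ : π = (n : ℝ≥0∞)⁻¹ • ∑ i, ∑ j, ENNReal.ofReal (w i j) • Measure.dirac (x i, y j))
    (i j : Fin n) (hij : 0 < w i j)
    (ytil : EuclideanSpace ℝ (Fin m))
    (hlt : (∫ q, c (x i, ytil) q ∂π) < ∫ q, c (x i, y j) q ∂π)
    (hgap : (w i j / n) ^ 2 *
        |c (x i, y j) (x i, y j) - 2 * c (x i, ytil) (x i, y j) + c (x i, ytil) (x i, ytil)| <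
      (w i j / n) * (2 * ((∫ q, c (x i, y j) q ∂π) - ∫ q, c (x i, ytil) q ∂π)))
    (πt : Measure (EuclideanSpace ℝ (Fin d) × EuclideanSpace ℝ (Fin m)))
    (hπt : πt = ENNReal.ofReal (w i j / n) • Measure.dirac (x i, ytil) +
      (π - ENNReal.ofReal (w i j / n) • Measure.dirac (x i, y j))) :
    IsProbabilityMeasure πt ∧
    πt.map Prod.fst = (n : ℝ≥0∞)⁻¹ • ∑ k, Measure.dirac (x k) ∧
    (∫ p, ∫ q, c p q ∂πt ∂πt) < ∫ p, ∫ q, c p q ∂π ∂π := by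
  classical
  obtain ⟨C, hC⟩ := hc_bdd
  set P : EuclideanSpace ℝ (Fin d) × EuclideanSpace ℝ (Fin m) := (x i, ytil) with hP
  set Q : EuclideanSpace ℝ (Fin d) × EuclideanSpace ℝ (Fin m) := (x i, y j) with hQ
  set ε : ℝ := w i j / n with hε
  have hn' : (0:ℝ) < n := by exact_mod_cast hn
  have hε0 : 0 ≤ ε := div_nonneg (hw i j) hn'.le
  set a : ℝ≥0∞ := ENNReal.ofReal ε with ha
  have ha_ne : a ≠ ∞ := ENNReal.ofReal_ne_top
  have ha_toReal : a.toReal = ε := ENNReal.toReal_ofReal hε0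
  -- the reduced measure ρ
  set F : Fin n × Fin n → Measure (EuclideanSpace ℝ (Fin d) × EuclideanSpace ℝ (Fin m)) :=
    fun p => ENNReal.ofReal (w p.1 p.2) • Measure.dirac (x p.1, y p.2) with hF
  set ρ : Measure (EuclideanSpace ℝ (Fin d) × EuclideanSpace ℝ (Fin m)) :=
    (n : ℝ≥0∞)⁻¹ • ∑ p ∈ Finset.univ.erase (i, j), F p with hρ
  -- a • dirac Q = n⁻¹ • F (i,j)
  have hsmul : a • Measure.dirac Q = (n : ℝ≥0∞)⁻¹ • F (i, j) := by
    rw [hF, smul_smul, ha, hε, ENNReal.ofReal_div_of_pos hn',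
      div_eq_mul_inv, ENNReal.ofReal_natCast]
    ring_nf
    rfl
  -- decomposition π = ρ + a • dirac Q
  have hdec : π = ρ + a • Measure.dirac Q := by
    rw [hπ, hρ, hsmul, ← smul_add,
      Finset.sum_erase_add Finset.univ F (Finset.mem_univ (i, j))]
    congr 1
    rw [← Finset.univ_product_univ, Finset.sum_product]
  -- finiteness instances
  have hfinsmul : ∀ (r : ℝ≥0∞) (z : EuclideanSpace ℝ (Fin d) × EuclideanSpace ℝ (Fin m)),
      r ≠ ∞ → IsFiniteMeasure (r • Measure.dirac z) := by
    intro r z hr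
    constructor
    simp [Measure.smul_apply, lt_top_iff_ne_top, hr]
  haveI hQfin : IsFiniteMeasure (a • Measure.dirac Q) := hfinsmul a Q ha_ne
  haveI hPfin : IsFiniteMeasure (a • Measure.dirac P) := hfinsmul a P ha_ne
  -- π is a probability measure
  have hrow' : ∀ k, ∑ l, ENNReal.ofReal (w k l) = 1 := by
    intro k
    rw [← ENNReal.ofReal_sum_of_nonneg (fun l _ => hw k l), hrow k, ENNReal.ofReal_one]
  haveI hπprob : IsProbabilityMeasure π := by
    constructor
    rw [hπ]
    simp only [Measure.smul_apply, Measure.coe_finset_sum, Finset.sum_apply,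
      Measure.dirac_apply_of_mem (Set.mem_univ _), smul_eq_mul, mul_one]
    rw [Finset.sum_congr rfl (fun k _ => hrow' k)]
    simp only [Finset.sum_const, Finset.card_univ, Fintype.card_fin, nsmul_eq_mul, mul_one]
    exact ENNReal.inv_mul_cancel (by exact_mod_cast hn.ne') (ENNReal.natCast_ne_top n)
  haveI hπfin : IsFiniteMeasure π := ⟨by rw [hπprob.measure_univ]; exact ENNReal.one_lt_top⟩
  have hρle : ρ ≤ π := by
    rw [hdec]
    exact Measure.le_add_right le_rfl
  haveI hρfin : IsFiniteMeasure ρ := by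
    constructor
    exact lt_of_le_of_lt (hρle Set.univ) (measure_lt_top π _)
  -- πt = ρ + a • dirac P
  have hπt2 : πt = ρ + a • Measure.dirac P := by
    rw [hπt, hdec, Measure.add_sub_cancel, add_comm]
  -- integrability of bounded measurable functions
  have hint : ∀ (f : EuclideanSpace ℝ (Fin d) × EuclideanSpace ℝ (Fin m) → ℝ)
      (μ : Measure (EuclideanSpace ℝ (Fin d) × EuclideanSpace ℝ (Fin m))),
      IsFiniteMeasure μ → Measurable f → (∀ q, |f q| ≤ C) → Integrable f μ := by
    intro f μ hμ hf hfb
    haveI := hμ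
    exact (integrable_const C).mono' hf.aestronglyMeasurable
      (Filter.Eventually.of_forall fun q => by simpa [Real.norm_eq_abs] using hfb q)
  -- key perturbation identity
  have key : ∀ (f : EuclideanSpace ℝ (Fin d) × EuclideanSpace ℝ (Fin m) → ℝ),
      Measurable f → (∀ q, |f q| ≤ C) →
      ∫ q, f q ∂πt = (∫ q, f q ∂π) + ε * (f P - f Q) := by
    intro f hf hfb
    rw [hπt2, hdec, integral_add_measure (hint f ρ hρfin hf hfb) (hint f _ hPfin hf hfb),
      integral_add_measure (hint f ρ hρfin hf hfb) (hint f _ hQfin hf hfb)]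
    simp only [integral_smul_measure, integral_dirac, ha_toReal, smul_eq_mul]
    ring
  -- explicit formula for integrals against π
  have hπint : ∀ (f : EuclideanSpace ℝ (Fin d) × EuclideanSpace ℝ (Fin m) → ℝ),
      Measurable f → (∀ q, |f q| ≤ C) →
      ∫ q, f q ∂π = (n : ℝ)⁻¹ * ∑ k, ∑ l, w k l * f (x k, y l) := by
    intro f hf hfb
    rw [hπ, integral_smul_measure,
      integral_finset_sum_measure (fun k _ => integrable_finset_sum_measure.mpr
        (fun l _ => hint f _ (hfinsmul _ _ ENNReal.ofReal_ne_top) hf hfb))]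
    simp only [integral_finset_sum_measure (fun l _ => hint f _
      (hfinsmul _ _ ENNReal.ofReal_ne_top) hf hfb), integral_smul_measure, integral_dirac,
      smul_eq_mul, ENNReal.toReal_inv, ENNReal.toReal_natCast]
    exact congrArg _ (Finset.sum_congr rfl fun k _ => Finset.sum_congr rfl fun l _ => by
      rw [ENNReal.toReal_ofReal (hw k l)])
  -- measurability of the inner kernels
  have hmeas : ∀ p, Measurable fun q => c p q := by
    intro p
    exact (hc_cont.comp (Continuous.prodMk_right p)).measurable
  have hmeas' : ∀ q, Measurable fun p => c p q := by
    intro q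
    exact (hc_cont.comp (Continuous.prodMk_left q)).measurable
  -- the marginal energy g
  set g : EuclideanSpace ℝ (Fin d) × EuclideanSpace ℝ (Fin m) → ℝ :=
    fun p => ∫ q, c p q ∂π with hg
  have hgb : ∀ p, |g p| ≤ C := by
    intro p
    have := norm_integral_le_of_norm_le_const (μ := π) (f := fun q => c p q) (C := C)
      (Filter.Eventually.of_forall fun q => by
        rw [Real.norm_eq_abs]; exact hC p q)
    simpa [Real.norm_eq_abs, hπprob.measure_univ] using this
  have hgcont : Continuous g := by
    have heq : g = fun p => (n : ℝ)⁻¹ * ∑ k, ∑ l, w k l * c p (x k, y l) :=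
      funext fun p => hπint _ (hmeas p) (hC p)
    rw [heq]
    refine continuous_const.mul (continuous_finset_sum _ fun k _ =>
      continuous_finset_sum _ fun l _ => continuous_const.mul ?_)
    exact hc_cont.comp (Continuous.prodMk_left (x k, y l))
  -- total masses
  have h1 : ρ Set.univ + a = 1 := by
    have h := hπprob.measure_univ
    rw [hdec] at h
    simpa [Measure.add_apply, Measure.smul_apply] using h
  have part1 : IsProbabilityMeasure πt := by
    constructor
    rw [hπt2]
    simpa [Measure.add_apply, Measure.smul_apply] using h1
  haveI := part1
  haveI hπtfin : IsFiniteMeasure πt := ⟨by rw [part1.measure_univ]; exact ENNReal.one_lt_top⟩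
  refine ⟨part1, ?_, ?_⟩
  -- marginal
  · have h2 : πt.map Prod.fst = π.map Prod.fst := by
      rw [hπt2, hdec, Measure.map_add _ _ measurable_fst, Measure.map_add _ _ measurable_fst]
      simp [Measure.map_smul, Measure.map_dirac' measurable_fst, hP, hQ]
    rw [h2, hπ, Measure.map_smul, map_finset_sum' _ _ measurable_fst]
    congr 1
    refine Finset.sum_congr rfl fun k _ => ?_
    rw [map_finset_sum' _ _ measurable_fst]
    simp_rw [Measure.map_smul, Measure.map_dirac' measurable_fst]
    rw [← Finset.sum_smul, hrow' k, one_smul]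
  -- energy decrease
  · have hgm := hgcont.measurable
    have hgPd : (∫ q, c P q ∂π) = g P := rfl
    have hgQd : (∫ q, c Q q ∂π) = g Q := rfl
    rw [hgPd, hgQd] at hgap
    have hsymmP : (∫ p, c p P ∂π) = g P := by
      rw [hg]
      exact integral_congr_ae (Filter.Eventually.of_forall fun p => hc_symm p P)
    have hsymmQ : (∫ p, c p Q ∂π) = g Q := by
      rw [hg]
      exact integral_congr_ae (Filter.Eventually.of_forall fun p => hc_symm p Q)
    have e2 : ∫ p, c p P ∂πt = g P + ε * (c P P - c Q P) := by
      rw [key (fun p => c p P) (hmeas' P) (fun q => hC q P), hsymmP]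
    have e3 : ∫ p, c p Q ∂πt = g Q + ε * (c P Q - c Q Q) := by
      rw [key (fun p => c p Q) (hmeas' Q) (fun q => hC q Q), hsymmQ]
    have e4 : ∫ p, g p ∂πt = (∫ p, g p ∂π) + ε * (g P - g Q) := key g hgm hgb
    have lhs : (∫ p, ∫ q, c p q ∂πt ∂πt)
        = (∫ p, g p ∂π) + ε * (g P - g Q)
          + ε * ((g P + ε * (c P P - c Q P)) - (g Q + ε * (c P Q - c Q Q))) := by
      calc (∫ p, ∫ q, c p q ∂πt ∂πt)
          = ∫ p, (g p + ε * (c p P - c p Q)) ∂πt :=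
            integral_congr_ae (Filter.Eventually.of_forall fun p => key _ (hmeas p) (hC p))
        _ = (∫ p, g p ∂πt) + ε * ((∫ p, c p P ∂πt) - ∫ p, c p Q ∂πt) := by
            have hiP : Integrable (fun p => c p P) πt :=
              hint _ πt hπtfin (hmeas' P) (fun q => hC q P)
            have hiQ : Integrable (fun p => c p Q) πt :=
              hint _ πt hπtfin (hmeas' Q) (fun q => hC q Q)
            have hiS : Integrable (fun p => ε * (c p P - c p Q)) πt := (hiP.sub hiQ).const_mul ε
            rw [integral_add (hint g πt hπtfin hgm hgb) hiS, MeasureTheory.integral_const_mul,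
              integral_sub hiP hiQ]
        _ = _ := by rw [e2, e3, e4]
    have hQP : c Q P = c P Q := hc_symm Q P
    have habs : c P P - 2 * c P Q + c Q Q ≤ |c Q Q - 2 * c P Q + c P P| := by
      have := le_abs_self (c Q Q - 2 * c P Q + c P P)
      linarith
    have hmul : ε ^ 2 * (c P P - 2 * c P Q + c Q Q)
        ≤ ε ^ 2 * |c Q Q - 2 * c P Q + c P P| :=
      mul_le_mul_of_nonneg_left habs (sq_nonneg ε)
    rw [lhs, hQP]
    show _ < ∫ p, g p ∂π
    nlinarith [hgap, hmul]
end

section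
/- Discrete deterministic optimality for normed costs: with the notation of the discrete setting, let c(x,x',y,y') = c̃(x,x',|y-y'|²) with c̃ continuous, nonnegative, symmetric in (x,x'), and such that t ↦ c̃(x,x,t) has a strict global minimum at t = 0 for all x. Suppose π = (1/n)Σ_{ij}π_{ij}δ_{(x_i,y_j)} ∈ Π(μ) has π_{ii} > 0 and π_{ij} > 0 for some i ≠ j with y_i ≠ y_j and both y_i, y_j ∈ argmin J_π(·|x_i). Then the perturbation γ = min{π_{ii},π_{ij}}·(1/n)·(δ_{(x_i,y_i)} - δ_{(x_i,y_j)}) satisfies: the linear term ∫∫ c dπ dγ = 0, and the quadratic term ∫∫ c dγ dγ = 2(min{π_{ii},π_{ij}}/n)²·(c̃(x_i,x_i,0) - c̃(x_i,x_i,|y_i-y_j|²)) < 0, hence J(π + γ) < J(π), so π is not optimal. -/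
open MeasureTheory
open scoped ENNReal

lemma aux_int_smul_dirac {α : Type*} [MeasurableSpace α] [MeasurableSingletonClass α]
    {f : α → ℝ} (hf : StronglyMeasurable f) {c : ℝ≥0∞} (hc : c ≠ ∞) (a : α) :
    Integrable f (c • Measure.dirac a) := by
  refine ⟨hf.aestronglyMeasurable, ?_⟩
  rw [hasFiniteIntegral_def, lintegral_smul_measure, lintegral_dirac]
  exact ENNReal.mul_lt_top hc.lt_top ENNReal.coe_lt_top

lemma aux_integrable_M {α : Type*} [MeasurableSpace α] [MeasurableSingletonClass α]
    {n : ℕ} (hn : 0 < n) (z : Fin n → Fin n → α) (v : Fin n → Fin n → ℝ)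
    {f : α → ℝ} (hf : StronglyMeasurable f) :
    Integrable f ((n : ℝ≥0∞)⁻¹ • ∑ p, ∑ q, ENNReal.ofReal (v p q) • Measure.dirac (z p q)) := by
  refine Integrable.smul_measure ?_ (by simp [hn.ne'])
  exact integrable_finset_sum_measure.2 fun p _ =>
    integrable_finset_sum_measure.2 fun q _ => aux_int_smul_dirac hf ENNReal.ofReal_ne_top _

lemma aux_integral_M {α : Type*} [MeasurableSpace α] [MeasurableSingletonClass α]
    {n : ℕ} (z : Fin n → Fin n → α) (v : Fin n → Fin n → ℝ) (hv : ∀ p q, 0 ≤ v p q)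
    {f : α → ℝ} (hf : StronglyMeasurable f) :
    ∫ a, f a ∂((n : ℝ≥0∞)⁻¹ • ∑ p, ∑ q, ENNReal.ofReal (v p q) • Measure.dirac (z p q)) =
      (n : ℝ)⁻¹ * ∑ p, ∑ q, v p q * f (z p q) := by
  rw [integral_smul_measure,
    integral_finset_sum_measure (fun p _ => integrable_finset_sum_measure.2 fun q _ =>
      aux_int_smul_dirac hf ENNReal.ofReal_ne_top _)]
  have : ∀ p : Fin n, ∫ a, f a ∂(∑ q, ENNReal.ofReal (v p q) • Measure.dirac (z p q)) =
      ∑ q, v p q * f (z p q) := by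
    intro p
    rw [integral_finset_sum_measure (fun q _ => aux_int_smul_dirac hf ENNReal.ofReal_ne_top _)]
    refine Finset.sum_congr rfl fun q _ => ?_
    rw [integral_smul_measure, integral_dirac' f _ hf, ENNReal.toReal_ofReal (hv p q)]
    rfl
  simp only [this, smul_eq_mul, ENNReal.toReal_inv]
  norm_num

abbrev EE (d m : ℕ) := EuclideanSpace ℝ (Fin d) × EuclideanSpace ℝ (Fin m)

/-- Discrete deterministic optimality for normed costs: if a plan splits the mass at `x_i`
between two distinct marginal minimizers `y_i ≠ y_j`, the swap perturbation has zero linear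
term and strictly negative quadratic term, so the plan is not optimal. -/
theorem stmt12 {d m n : ℕ} (hn : 0 < n)
    (x : Fin n → EuclideanSpace ℝ (Fin d)) (hx : Function.Injective x)
    (y : Fin n → EuclideanSpace ℝ (Fin m))
    (w : Fin n → Fin n → ℝ) (hw : ∀ i j, 0 ≤ w i j) (hrow : ∀ i, ∑ j, w i j = 1)
    (ct : EuclideanSpace ℝ (Fin d) → EuclideanSpace ℝ (Fin d) → ℝ → ℝ)
    (hct_cont : Continuous fun p : EuclideanSpace ℝ (Fin d) × EuclideanSpace ℝ (Fin d) × ℝ =>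
      ct p.1 p.2.1 p.2.2)
    (hct_bdd : ∃ C : ℝ, ∀ a b t, |ct a b t| ≤ C)
    (hct_nonneg : ∀ a b t, 0 ≤ ct a b t)
    (hct_symm : ∀ a b t, ct a b t = ct b a t)
    (hct_strict : ∀ a, ∀ t : ℝ, t ≠ 0 → ct a a 0 < ct a a t)
    (c : EuclideanSpace ℝ (Fin d) × EuclideanSpace ℝ (Fin m) →
         EuclideanSpace ℝ (Fin d) × EuclideanSpace ℝ (Fin m) → ℝ)
    (hc : ∀ p q, c p q = ct p.1 q.1 (‖p.2 - q.2‖ ^ 2))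
    (π : Measure (EuclideanSpace ℝ (Fin d) × EuclideanSpace ℝ (Fin m)))
    (hπ : π = (n : ℝ≥0∞)⁻¹ • ∑ i, ∑ j, ENNReal.ofReal (w i j) • Measure.dirac (x i, y j))
    (i j : Fin n) (hij : i ≠ j) (hii_pos : 0 < w i i) (hij_pos : 0 < w i j)
    (hy : y i ≠ y j)
    (hmin_i : ∀ z, (∫ q, c (x i, y i) q ∂π) ≤ ∫ q, c (x i, z) q ∂π)
    (hmin_j : ∀ z, (∫ q, c (x i, y j) q ∂π) ≤ ∫ q, c (x i, z) q ∂π)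
    (πt : Measure (EuclideanSpace ℝ (Fin d) × EuclideanSpace ℝ (Fin m)))
    (hπt : πt = ENNReal.ofReal (min (w i i) (w i j) / n) • Measure.dirac (x i, y i) +
      (π - ENNReal.ofReal (min (w i i) (w i j) / n) • Measure.dirac (x i, y j))) :
    (min (w i i) (w i j) / n) *
        ((∫ q, c (x i, y i) q ∂π) - ∫ q, c (x i, y j) q ∂π) = 0 ∧
    2 * (min (w i i) (w i j) / n) ^ 2 *
        (ct (x i) (x i) 0 - ct (x i) (x i) (‖y i - y j‖ ^ 2)) < 0 ∧
    (∫ p, ∫ q, c p q ∂πt ∂πt) < ∫ p, ∫ q, c p q ∂π ∂π := by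
  have hn' : (0:ℝ) < (n:ℝ) := by exact_mod_cast hn
  set e : ℝ := min (w i i) (w i j) with he_def
  have he : 0 < e := lt_min hii_pos hij_pos
  have heij : e ≤ w i j := min_le_right _ _
  -- modified weights
  set wm : Fin n → Fin n → ℝ := fun p q => w p q - (if p = i ∧ q = j then e else 0) with hwm_def
  set w' : Fin n → Fin n → ℝ := fun p q => wm p q + (if p = i ∧ q = i then e else 0) with hw'_def
  have hwm_nonneg : ∀ p q, 0 ≤ wm p q := by
    intro p q
    simp only [hwm_def]
    split_ifs with h
    · obtain ⟨hp, hq⟩ := h; subst hp; subst hq; linarith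
    · simpa using hw p q
  have hw'_nonneg : ∀ p q, 0 ≤ w' p q := by
    intro p q
    simp only [hw'_def]
    split_ifs with h
    · linarith [hwm_nonneg p q]
    · simpa using hwm_nonneg p q
  -- scalar identity
  have hA : ENNReal.ofReal (e / n) = (n : ℝ≥0∞)⁻¹ * ENNReal.ofReal e := by
    rw [div_eq_mul_inv, mul_comm, ENNReal.ofReal_mul (by positivity),
      ENNReal.ofReal_inv_of_pos hn', ENNReal.ofReal_natCast]
  -- continuity / measurability of the cost
  have hc_cont : Continuous fun pq : EE d m × EE d m => c pq.1 pq.2 := by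
    have : (fun pq : EE d m × EE d m => c pq.1 pq.2) =
        fun pq : EE d m × EE d m => ct pq.1.1 pq.2.1 (‖pq.1.2 - pq.2.2‖ ^ 2) := by
      funext pq; rw [hc]
    rw [this]; fun_prop
  have hcp_meas : ∀ p : EE d m, StronglyMeasurable (c p) := by
    intro p
    exact (hc_cont.comp (Continuous.prodMk_right p)).stronglyMeasurable
  have hsym : ∀ p q : EE d m, c p q = c q p := by
    intro p q; rw [hc, hc, hct_symm, norm_sub_rev]
  -- split π
  have hsplit : π = ((n : ℝ≥0∞)⁻¹ •
      ∑ p, ∑ q, ENNReal.ofReal (wm p q) • Measure.dirac (x p, y q)) +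
      ENNReal.ofReal (e / n) • Measure.dirac ((x i, y j) : EE d m) := by
    rw [hπ, hA, mul_smul, ← smul_add]
    congr 1
    have key : ∀ p q : Fin n, ENNReal.ofReal (w p q) • Measure.dirac ((x p, y q) : EE d m) =
        ENNReal.ofReal (wm p q) • Measure.dirac ((x p, y q) : EE d m) +
        (if p = i ∧ q = j then ENNReal.ofReal e • Measure.dirac ((x i, y j) : EE d m) else 0) := by
      intro p q
      simp only [hwm_def]
      split_ifs with h
      · rw [h.1, h.2, ← add_smul, ← ENNReal.ofReal_add (by linarith [heij]) he.le,
          sub_add_cancel]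
      · rw [sub_zero, add_zero]
    simp only [key, Finset.sum_add_distrib]
    congr 1
    simp [ite_and, Finset.sum_ite_eq']
  haveI : IsFiniteMeasure (ENNReal.ofReal (e / n) • Measure.dirac ((x i, y j) : EE d m)) := by
    refine ⟨?_⟩
    simp [Measure.smul_apply]
  have hsub : π - ENNReal.ofReal (e / n) • Measure.dirac ((x i, y j) : EE d m) =
      (n : ℝ≥0∞)⁻¹ • ∑ p, ∑ q, ENNReal.ofReal (wm p q) • Measure.dirac (x p, y q) := by
    rw [hsplit]; exact Measure.add_sub_cancel
  have hπt' : πt = (n : ℝ≥0∞)⁻¹ •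
      ∑ p, ∑ q, ENNReal.ofReal (w' p q) • Measure.dirac (x p, y q) := by
    rw [hπt, hsub, hA, mul_smul, ← smul_add]
    congr 1
    have key : ∀ p q : Fin n, ENNReal.ofReal (w' p q) • Measure.dirac ((x p, y q) : EE d m) =
        ENNReal.ofReal (wm p q) • Measure.dirac ((x p, y q) : EE d m) +
        (if p = i ∧ q = i then ENNReal.ofReal e • Measure.dirac ((x i, y i) : EE d m) else 0) := by
      intro p q
      simp only [hw'_def]
      split_ifs with h
      · rw [h.1, h.2, ← add_smul, ← ENNReal.ofReal_add (hwm_nonneg i i) he.le]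
      · rw [add_zero, add_zero]
    simp only [key, Finset.sum_add_distrib]
    rw [add_comm]
    congr 1
    simp [ite_and, Finset.sum_ite_eq']
  -- integral formulas
  have hIπ : ∀ f : EE d m → ℝ, StronglyMeasurable f →
      ∫ p, f p ∂π = (n : ℝ)⁻¹ * ∑ p, ∑ q, w p q * f (x p, y q) := by
    intro f hf; rw [hπ]; exact aux_integral_M _ _ hw hf
  have hIπt : ∀ f : EE d m → ℝ, StronglyMeasurable f →
      ∫ p, f p ∂πt = (n : ℝ)⁻¹ * ∑ p, ∑ q, w' p q * f (x p, y q) := by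
    intro f hf; rw [hπt']; exact aux_integral_M _ _ hw'_nonneg hf
  have hIntπ : ∀ f : EE d m → ℝ, StronglyMeasurable f → Integrable f π := by
    intro f hf; rw [hπ]; exact aux_integrable_M hn _ _ hf
  -- key difference formula
  have hdiff : ∀ f : EE d m → ℝ, StronglyMeasurable f →
      ∫ p, f p ∂πt = (∫ p, f p ∂π) + (e / n) * (f (x i, y i) - f (x i, y j)) := by
    intro f hf
    rw [hIπ f hf, hIπt f hf]
    have hterm : ∀ p q : Fin n, w' p q * f (x p, y q) =
        w p q * f (x p, y q) + (if p = i ∧ q = i then e * f (x i, y i) else 0)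
          - (if p = i ∧ q = j then e * f (x i, y j) else 0) := by
      intro p q
      simp only [hw'_def, hwm_def]
      by_cases h2 : p = i ∧ q = j
      · have h1 : ¬(p = i ∧ q = i) := by
          rintro ⟨-, hq⟩; exact hij (hq.symm.trans h2.2)
        rw [if_pos h2, if_pos h2, if_neg h1, if_neg h1, h2.1, h2.2]; ring
      · by_cases h1 : p = i ∧ q = i
        · rw [if_pos h1, if_pos h1, if_neg h2, if_neg h2, h1.1, h1.2]; ring
        · rw [if_neg h1, if_neg h1, if_neg h2, if_neg h2]; ring
    have hsum1 : (∑ p : Fin n, ∑ q : Fin n, if p = i ∧ q = i then e * f (x i, y i) else 0)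
        = e * f (x i, y i) := by simp [ite_and, Finset.sum_ite_eq']
    have hsum2 : (∑ p : Fin n, ∑ q : Fin n, if p = i ∧ q = j then e * f (x i, y j) else 0)
        = e * f (x i, y j) := by simp [ite_and, Finset.sum_ite_eq']
    have hsplit_sum : (∑ p, ∑ q, w' p q * f (x p, y q)) =
        (∑ p, ∑ q, w p q * f (x p, y q)) + e * f (x i, y i) - e * f (x i, y j) := by
      simp only [hterm, Finset.sum_sub_distrib, Finset.sum_add_distrib]
      rw [hsum1, hsum2]
    rw [hsplit_sum]
    field_simp
    ring
  -- part 1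
  have hGij : (∫ q, c (x i, y i) q ∂π) = ∫ q, c (x i, y j) q ∂π :=
    le_antisymm (hmin_i (y j)) (hmin_j (y i))
  have part1 : (e / n) * ((∫ q, c (x i, y i) q ∂π) - ∫ q, c (x i, y j) q ∂π) = 0 := by
    rw [hGij, sub_self, mul_zero]
  -- part 2
  have ht : (‖y i - y j‖ ^ 2 : ℝ) ≠ 0 :=
    pow_ne_zero 2 (norm_ne_zero_iff.2 (sub_ne_zero.2 hy))
  have hstrict := hct_strict (x i) _ ht
  have part2 : 2 * (e / n) ^ 2 * (ct (x i) (x i) 0 - ct (x i) (x i) (‖y i - y j‖ ^ 2)) < 0 := by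
    have h1 : (0:ℝ) < 2 * (e / n) ^ 2 := by positivity
    have h2 : ct (x i) (x i) 0 - ct (x i) (x i) (‖y i - y j‖ ^ 2) < 0 := by linarith
    exact mul_neg_of_pos_of_neg h1 h2
  refine ⟨part1, part2, ?_⟩
  -- part 3
  -- continuity in the first variable
  have hcq_cont : ∀ q0 : EE d m, Continuous fun p : EE d m => c p q0 := by
    intro q0
    exact hc_cont.comp (continuous_id.prodMk continuous_const)
  -- inner integrals
  have hGt_eq : (fun p : EE d m => ∫ q, c p q ∂πt) = fun p : EE d m =>
      (∫ q, c p q ∂π) + (e / n) * (c p (x i, y i) - c p (x i, y j)) :=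
    funext fun p => hdiff (c p) (hcp_meas p)
  have hG_sum : (fun p : EE d m => ∫ q, c p q ∂π) = fun p : EE d m =>
      (n : ℝ)⁻¹ * ∑ p', ∑ q', w p' q' * c p (x p', y q') :=
    funext fun p => hIπ (c p) (hcp_meas p)
  have hG_cont : Continuous fun p : EE d m => ∫ q, c p q ∂π := by
    rw [hG_sum]
    refine continuous_const.mul ?_
    refine continuous_finset_sum _ fun p' _ => continuous_finset_sum _ fun q' _ => ?_
    exact continuous_const.mul (hcq_cont (x p', y q'))
  have hh_cont : Continuous fun p : EE d m => c p (x i, y i) - c p (x i, y j) :=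
    (hcq_cont _).sub (hcq_cont _)
  have hGt_cont : Continuous fun p : EE d m => ∫ q, c p q ∂πt := by
    rw [hGt_eq]
    exact hG_cont.add (continuous_const.mul hh_cont)
  -- expand the double integral over πt
  have step1 : (∫ p, ∫ q, c p q ∂πt ∂πt) =
      (∫ p, ∫ q, c p q ∂πt ∂π) + (e / n) * ((∫ q, c (x i, y i) q ∂πt) - ∫ q, c (x i, y j) q ∂πt) :=
    hdiff _ hGt_cont.stronglyMeasurable
  have hint_h : Integrable (fun p : EE d m => c p (x i, y i) - c p (x i, y j)) π :=
    hIntπ _ hh_cont.stronglyMeasurable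
  have hint_G : Integrable (fun p : EE d m => ∫ q, c p q ∂π) π :=
    hIntπ _ hG_cont.stronglyMeasurable
  have step2 : (∫ p, ∫ q, c p q ∂πt ∂π) =
      (∫ p, ∫ q, c p q ∂π ∂π) + (e / n) * ∫ p, (c p (x i, y i) - c p (x i, y j)) ∂π := by
    rw [hGt_eq]
    rw [integral_add hint_G (hint_h.const_mul _), integral_const_mul]
  have hinth_val : (∫ p, (c p (x i, y i) - c p (x i, y j)) ∂π) = 0 := by
    have : (fun p : EE d m => c p (x i, y i) - c p (x i, y j)) =
        fun p : EE d m => c (x i, y i) p - c (x i, y j) p := by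
      funext p; rw [hsym p (x i, y i), hsym p (x i, y j)]
    rw [this, integral_sub (hIntπ _ (hcp_meas _)) (hIntπ _ (hcp_meas _)), hGij, sub_self]
  -- the two evaluated inner πt-integrals
  have heval : ∀ z0 : EuclideanSpace ℝ (Fin m), (∫ q, c (x i, z0) q ∂πt) =
      (∫ q, c (x i, z0) q ∂π) + (e / n) * (c (x i, z0) (x i, y i) - c (x i, z0) (x i, y j)) :=
    fun z0 => hdiff _ (hcp_meas _)
  have hcvals : c ((x i, y i) : EE d m) (x i, y i) = ct (x i) (x i) 0 ∧
      c ((x i, y j) : EE d m) (x i, y j) = ct (x i) (x i) 0 ∧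
      c ((x i, y i) : EE d m) (x i, y j) = ct (x i) (x i) (‖y i - y j‖ ^ 2) ∧
      c ((x i, y j) : EE d m) (x i, y i) = ct (x i) (x i) (‖y i - y j‖ ^ 2) := by
    refine ⟨?_, ?_, ?_, ?_⟩ <;> rw [hc] <;> simp [norm_sub_rev (y j) (y i)]
  obtain ⟨hv1, hv2, hv3, hv4⟩ := hcvals
  have hfinal : (∫ p, ∫ q, c p q ∂πt ∂πt) = (∫ p, ∫ q, c p q ∂π ∂π) +
      2 * (e / n) ^ 2 * (ct (x i) (x i) 0 - ct (x i) (x i) (‖y i - y j‖ ^ 2)) := by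
    rw [step1, step2, hinth_val, heval (y i), heval (y j), hv1, hv2, hv3, hv4, hGij]
    ring
  rw [hfinal]
  linarith
end

section
/- Mutual singularity of branch measures: let c(x,x',y,y') = c̃(x,x',|y-y'|²) be continuous, nonnegative, symmetric in (x,x'), with t ↦ c̃(x,x,t) having a strict global minimum at t = 0 for all x. Let π minimize J(π) = ∫∫ c dπ dπ over Π(μ), and let λ_1, λ_2 : B_δ(x_0) → ℝ^m be continuous functions with λ_1(x) ≠ λ_2(x) for all x ∈ B_δ(x_0), both valued in the set of global minimizers of the marginal problem J_π(·|x). Let μ_1, μ_2 be the x-marginals of π restricted to the graphs {(x, λ_1(x)) : x ∈ B_δ(x_0)} and {(x, λ_2(x)) : x ∈ B_δ(x_0)} respectively. Then μ_1 ⊥ μ_2. -/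
open MeasureTheory Metric

private lemma stmt16_integrable {α : Type*} [MeasurableSpace α]
    (κ : Measure α) [IsFiniteMeasure κ] {f : α → ℝ}
    (hf : AEStronglyMeasurable f κ) {C : ℝ} (hC : ∀ x, |f x| ≤ C) : Integrable f κ :=
  (integrable_const C).mono' hf
    (Filter.Eventually.of_forall fun x => by simpa [Real.norm_eq_abs] using hC x)

private lemma stmt16_J_add_left {P : Type*} [MeasurableSpace P] {f : P × P → ℝ}
    (α α' β : Measure P) [IsFiniteMeasure α] [IsFiniteMeasure α'] [IsFiniteMeasure β]
    (h : ∀ κ : Measure (P × P), IsFiniteMeasure κ → Integrable f κ) :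
    ∫ z, f z ∂((α + α').prod β) = ∫ z, f z ∂(α.prod β) + ∫ z, f z ∂(α'.prod β) := by
  rw [Measure.add_prod]
  exact integral_add_measure (h _ inferInstance) (h _ inferInstance)

private lemma stmt16_J_add_right {P : Type*} [MeasurableSpace P] {f : P × P → ℝ}
    (α β β' : Measure P) [IsFiniteMeasure α] [IsFiniteMeasure β] [IsFiniteMeasure β']
    (h : ∀ κ : Measure (P × P), IsFiniteMeasure κ → Integrable f κ) :
    ∫ z, f z ∂(α.prod (β + β')) = ∫ z, f z ∂(α.prod β) + ∫ z, f z ∂(α.prod β') := by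
  rw [Measure.prod_add]
  exact integral_add_measure (h _ inferInstance) (h _ inferInstance)

private lemma stmt16_J_swap {P : Type*} [MeasurableSpace P] {f : P × P → ℝ}
    (α β : Measure P) [IsFiniteMeasure α] [IsFiniteMeasure β]
    (hsymm : ∀ a b, f (a, b) = f (b, a)) :
    ∫ z, f z ∂(α.prod β) = ∫ z, f z ∂(β.prod α) := by
  rw [← integral_prod_swap f]
  exact integral_congr_ae (Filter.Eventually.of_forall fun z => hsymm z.2 z.1)

/-- Mutual singularity of branch measures: if an optimal plan charges two continuous,
everywhere-distinct branches of marginal minimizers over a ball, the corresponding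
`x`-marginal measures are mutually singular. -/
theorem stmt16 {d m : ℕ}
    (μ : Measure (EuclideanSpace ℝ (Fin d))) [IsProbabilityMeasure μ]
    (ct : EuclideanSpace ℝ (Fin d) → EuclideanSpace ℝ (Fin d) → ℝ → ℝ)
    (hct_cont : Continuous fun p : EuclideanSpace ℝ (Fin d) × EuclideanSpace ℝ (Fin d) × ℝ =>
      ct p.1 p.2.1 p.2.2)
    (hct_bdd : ∃ C : ℝ, ∀ a b t, |ct a b t| ≤ C)
    (hct_nonneg : ∀ a b t, 0 ≤ ct a b t)
    (hct_symm : ∀ a b t, ct a b t = ct b a t)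
    (hct_strict : ∀ a, ∀ t : ℝ, t ≠ 0 → ct a a 0 < ct a a t)
    (c : EuclideanSpace ℝ (Fin d) × EuclideanSpace ℝ (Fin m) →
         EuclideanSpace ℝ (Fin d) × EuclideanSpace ℝ (Fin m) → ℝ)
    (hc : ∀ p q, c p q = ct p.1 q.1 (‖p.2 - q.2‖ ^ 2))
    (π : Measure (EuclideanSpace ℝ (Fin d) × EuclideanSpace ℝ (Fin m)))
    [IsProbabilityMeasure π]
    (hπmarg : π.map Prod.fst = μ)
    (hopt : ∀ π' : Measure (EuclideanSpace ℝ (Fin d) × EuclideanSpace ℝ (Fin m)),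
      IsProbabilityMeasure π' → π'.map Prod.fst = μ →
      (∫ pq, c pq.1 pq.2 ∂(π.prod π)) ≤ ∫ pq, c pq.1 pq.2 ∂(π'.prod π'))
    (x0 : EuclideanSpace ℝ (Fin d)) (δ : ℝ) (hδ : 0 < δ)
    (lam1 lam2 : EuclideanSpace ℝ (Fin d) → EuclideanSpace ℝ (Fin m))
    (hlam1c : ContinuousOn lam1 (ball x0 δ)) (hlam2c : ContinuousOn lam2 (ball x0 δ))
    (hne : ∀ x ∈ ball x0 δ, lam1 x ≠ lam2 x)
    (hmin1 : ∀ x ∈ ball x0 δ, ∀ z, (∫ q, c (x, lam1 x) q ∂π) ≤ ∫ q, c (x, z) q ∂π)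
    (hmin2 : ∀ x ∈ ball x0 δ, ∀ z, (∫ q, c (x, lam2 x) q ∂π) ≤ ∫ q, c (x, z) q ∂π)
    (μ1 μ2 : Measure (EuclideanSpace ℝ (Fin d)))
    (hμ1 : μ1 = (π.restrict {p | p.1 ∈ ball x0 δ ∧ p.2 = lam1 p.1}).map Prod.fst)
    (hμ2 : μ2 = (π.restrict {p | p.1 ∈ ball x0 δ ∧ p.2 = lam2 p.1}).map Prod.fst) :
    Measure.MutuallySingular μ1 μ2 := by
  classical
  by_contra hsing
  obtain ⟨C, hC⟩ := hct_bdd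
  set s : Set (EuclideanSpace ℝ (Fin d)) := ball x0 δ with hs_def
  haveI hOMS : OpensMeasurableSpace (((EuclideanSpace ℝ (Fin d)) × (EuclideanSpace ℝ (Fin m))) × ((EuclideanSpace ℝ (Fin d)) × (EuclideanSpace ℝ (Fin m)))) := Prod.opensMeasurableSpace
  -- symmetry of c
  have csymm : ∀ p q, c p q = c q p := fun p q => by
    rw [hc, hc, hct_symm, norm_sub_rev]
  -- the cost as an explicit continuous bounded function on pairs
  set cFun : ((EuclideanSpace ℝ (Fin d)) × (EuclideanSpace ℝ (Fin m))) × ((EuclideanSpace ℝ (Fin d)) × (EuclideanSpace ℝ (Fin m))) → ℝ := fun z => c z.1 z.2 with hcFun_def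
  have hcFun_eq : cFun = fun z => ct z.1.1 z.2.1 (‖z.1.2 - z.2.2‖ ^ 2) :=
    funext fun z => hc _ _
  have hcFun_cont : Continuous cFun := by
    rw [hcFun_eq]
    exact hct_cont.comp ((continuous_fst.fst).prodMk ((continuous_snd.fst).prodMk
      (((continuous_fst.snd.sub continuous_snd.snd).norm).pow 2)))
  have hcFun_bdd : ∀ z, |cFun z| ≤ C := fun z => by rw [hcFun_eq]; exact hC _ _ _
  have hInt : ∀ κ : Measure (((EuclideanSpace ℝ (Fin d)) × (EuclideanSpace ℝ (Fin m))) × ((EuclideanSpace ℝ (Fin d)) × (EuclideanSpace ℝ (Fin m)))), IsFiniteMeasure κ → Integrable cFun κ :=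
    fun κ hκ => by
      haveI := hκ
      exact stmt16_integrable κ hcFun_cont.aestronglyMeasurable hcFun_bdd
  -- finiteness of μ1 μ2
  have hμifin : ∀ (lam : (EuclideanSpace ℝ (Fin d)) → (EuclideanSpace ℝ (Fin m))),
      IsFiniteMeasure ((π.restrict {p : (EuclideanSpace ℝ (Fin d)) × (EuclideanSpace ℝ (Fin m)) | p.1 ∈ s ∧ p.2 = lam p.1}).map Prod.fst) := by
    intro lam
    constructor
    rw [Measure.map_apply measurable_fst MeasurableSet.univ]
    exact lt_of_le_of_lt (le_trans (measure_mono (Set.subset_univ _))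
      ((Measure.restrict_apply_univ _).le.trans (measure_mono (Set.subset_univ _))))
      (measure_lt_top π _)
  haveI hμ1fin : IsFiniteMeasure μ1 := hμ1 ▸ hμifin lam1
  haveI hμ2fin : IsFiniteMeasure μ2 := hμ2 ▸ hμifin lam2
  -- the common part ν of μ1 and μ2
  set f : (EuclideanSpace ℝ (Fin d)) → ENNReal := μ1.rnDeriv μ2 with hf_def
  set ν : Measure (EuclideanSpace ℝ (Fin d)) := μ2.withDensity (fun x => min (f x) 1) with hν_def
  have hνle2 : ν ≤ μ2 := by
    calc ν ≤ μ2.withDensity 1 :=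
          withDensity_mono (Filter.Eventually.of_forall fun x => min_le_right _ _)
      _ = μ2 := withDensity_one
  have hνle1 : ν ≤ μ1 := by
    calc ν ≤ μ2.withDensity f :=
          withDensity_mono (Filter.Eventually.of_forall fun x => min_le_left _ _)
      _ ≤ μ1 := Measure.withDensity_rnDeriv_le μ1 μ2
  haveI hνfin : IsFiniteMeasure ν := isFiniteMeasure_of_le μ2 hνle2
  have hν0 : ν ≠ 0 := by
    intro h
    have hmin0 : (fun x => min (f x) 1) =ᵐ[μ2] 0 :=
      (withDensity_eq_zero_iff
        (((Measure.measurable_rnDeriv μ1 μ2).min measurable_const).aemeasurable)).mp h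
    have hf0 : f =ᵐ[μ2] 0 := by
      filter_upwards [hmin0] with x hx
      simp only [Pi.zero_apply] at hx ⊢
      rcases min_eq_bot.mp hx with h' | h'
      · exact h'
      · exact absurd h' one_ne_zero
    have hwd0 : μ2.withDensity f = 0 := by
      rw [withDensity_congr_ae hf0, withDensity_zero]
    have : μ1 = μ1.singularPart μ2 := by
      haveI : μ1.HaveLebesgueDecomposition μ2 := Measure.haveLebesgueDecomposition_of_sigmaFinite μ1 μ2
      conv_lhs => rw [μ1.haveLebesgueDecomposition_add μ2]
      rw [hwd0, add_zero]
    exact hsing (this ▸ Measure.mutuallySingular_singularPart μ1 μ2)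
  -- ν is carried by the ball s
  have hμ1s : μ1 sᶜ = 0 := by
    rw [hμ1, Measure.map_apply measurable_fst measurableSet_ball.compl,
      Measure.restrict_apply (measurable_fst measurableSet_ball.compl)]
    have hempty : (Prod.fst ⁻¹' sᶜ ∩ {p : (EuclideanSpace ℝ (Fin d)) × (EuclideanSpace ℝ (Fin m)) | p.1 ∈ s ∧ p.2 = lam1 p.1}) = ∅ := by
      ext p
      simp only [Set.mem_inter_iff, Set.mem_preimage, Set.mem_compl_iff, Set.mem_setOf_eq,
        Set.mem_empty_iff_false, iff_false, not_and]
      tauto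
    rw [hempty, measure_empty]
  have hνs : ν sᶜ = 0 := le_antisymm (le_trans (hνle1 sᶜ) hμ1s.le) zero_le
  have hνspos : 0 < ν s := by
    have h1 : ν Set.univ ≤ ν s := by
      have h2 := measure_union_le (μ := ν) s sᶜ
      rw [Set.union_compl_self, hνs, add_zero] at h2
      exact h2
    refine lt_of_lt_of_le ?_ h1
    exact pos_iff_ne_zero.mpr fun h => hν0 (Measure.measure_univ_eq_zero.mp h)
  -- a point of positive ν-density inside s
  have hAeq : ν (ν.everywherePosSubset s) = ν s :=
    measure_congr (Measure.everywherePosSubset_ae_eq_of_measure_ne_top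
      measurableSet_ball (measure_ne_top ν s))
  obtain ⟨x1, hx1⟩ : (ν.everywherePosSubset s).Nonempty := by
    apply nonempty_of_measure_ne_zero (μ := ν)
    rw [hAeq]
    exact hνspos.ne'
  have hx1s : x1 ∈ s := hx1.1
  have hx1pos : ∀ n ∈ nhdsWithin x1 s, 0 < ν n := hx1.2
  have hsx1 : s ∈ nhds x1 := isOpen_ball.mem_nhds hx1s
  -- measurable extensions of lam1 lam2
  set lam1' : (EuclideanSpace ℝ (Fin d)) → (EuclideanSpace ℝ (Fin m)) := fun x => if hx : x ∈ s then lam1 x else 0 with hlam1'_def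
  set lam2' : (EuclideanSpace ℝ (Fin d)) → (EuclideanSpace ℝ (Fin m)) := fun x => if hx : x ∈ s then lam2 x else 0 with hlam2'_def
  have hlam1'eq : ∀ x ∈ s, lam1' x = lam1 x := fun x hx => dif_pos hx
  have hlam2'eq : ∀ x ∈ s, lam2' x = lam2 x := fun x hx => dif_pos hx
  have hlam1m : Measurable lam1' :=
    Measurable.dite (hlam1c.restrict.measurable) measurable_const measurableSet_ball
  have hlam2m : Measurable lam2' :=
    Measurable.dite (hlam2c.restrict.measurable) measurable_const measurableSet_ball
  have hl1 : ContinuousAt lam1' x1 :=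
    (hlam1c.continuousAt hsx1).congr
      (Filter.eventuallyEq_of_mem hsx1 fun x hx => (hlam1'eq x hx).symm)
  have hl2 : ContinuousAt lam2' x1 :=
    (hlam2c.continuousAt hsx1).congr
      (Filter.eventuallyEq_of_mem hsx1 fun x hx => (hlam2'eq x hx).symm)
  -- the quadratic-form integrand F
  set F : (EuclideanSpace ℝ (Fin d)) × (EuclideanSpace ℝ (Fin d)) → ℝ := fun z =>
    ct z.1 z.2 (‖lam1' z.1 - lam1' z.2‖ ^ 2) + ct z.1 z.2 (‖lam2' z.1 - lam2' z.2‖ ^ 2)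
      - ct z.1 z.2 (‖lam1' z.1 - lam2' z.2‖ ^ 2)
      - ct z.1 z.2 (‖lam2' z.1 - lam1' z.2‖ ^ 2) with hF_def
  have hct_at : ∀ u : (EuclideanSpace ℝ (Fin d)) × (EuclideanSpace ℝ (Fin d)) → ℝ, ContinuousAt u (x1, x1) →
      ContinuousAt (fun z : (EuclideanSpace ℝ (Fin d)) × (EuclideanSpace ℝ (Fin d)) => ct z.1 z.2 (u z)) (x1, x1) := fun u hu =>
    (hct_cont.continuousAt.comp (continuousAt_fst.prodMk (continuousAt_snd.prodMk hu)) :)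
  have hsq : ∀ (g h : (EuclideanSpace ℝ (Fin d)) → (EuclideanSpace ℝ (Fin m))), ContinuousAt g x1 → ContinuousAt h x1 →
      ContinuousAt (fun z : (EuclideanSpace ℝ (Fin d)) × (EuclideanSpace ℝ (Fin d)) => ‖g z.1 - h z.2‖ ^ 2) (x1, x1) := fun g h hg hh =>
    (((hg.comp continuousAt_fst).sub (hh.comp continuousAt_snd)).norm).pow 2
  have hFcont : ContinuousAt F (x1, x1) := by
    exact (((hct_at _ (hsq _ _ hl1 hl1)).add (hct_at _ (hsq _ _ hl2 hl2))).sub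
      (hct_at _ (hsq _ _ hl1 hl2))).sub (hct_at _ (hsq _ _ hl2 hl1))
  have hF0 : F (x1, x1) < 0 := by
    have ht0 : ‖lam1' x1 - lam2' x1‖ ^ 2 ≠ 0 := by
      rw [hlam1'eq x1 hx1s, hlam2'eq x1 hx1s]
      simpa [sub_eq_zero] using hne x1 hx1s
    have h1 : ct x1 x1 0 < ct x1 x1 (‖lam1' x1 - lam2' x1‖ ^ 2) := hct_strict x1 _ ht0
    have h2 : ct x1 x1 0 < ct x1 x1 (‖lam2' x1 - lam1' x1‖ ^ 2) := by
      rw [norm_sub_rev]; exact h1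
    have e1 : ‖lam1' x1 - lam1' x1‖ ^ 2 = 0 := by simp
    have e2 : ‖lam2' x1 - lam2' x1‖ ^ 2 = 0 := by simp
    simp only [hF_def, e1, e2]
    linarith
  set ε0 : ℝ := F (x1, x1) / 2 with hε0_def
  have hε0neg : ε0 < 0 := by
    rw [hε0_def]; exact div_neg_of_neg_of_pos hF0 two_pos
  have hFlt : F (x1, x1) < ε0 := by
    rw [hε0_def]; linarith [hF0]
  -- a small ball B on which F < ε0
  have hev : F ⁻¹' Set.Iio ε0 ∈ nhds (x1, x1) := hFcont (Iio_mem_nhds hFlt)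
  rw [nhds_prod_eq] at hev
  obtain ⟨V, hV, hVsub⟩ := Filter.mem_prod_self_iff.mp hev
  obtain ⟨r, hr, hball⟩ := Metric.mem_nhds_iff.mp (Filter.inter_mem hV hsx1)
  set B : Set (EuclideanSpace ℝ (Fin d)) := ball x1 r with hB_def
  have hBV : B ⊆ V := fun x hx => (hball hx).1
  have hBs : B ⊆ s := fun x hx => (hball hx).2
  have hFB : ∀ z ∈ B ×ˢ B, F z < ε0 := fun z hz => hVsub ⟨hBV hz.1, hBV hz.2⟩
  -- the restricted common mass ν'
  set ν' : Measure (EuclideanSpace ℝ (Fin d)) := ν.restrict B with hν'_def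
  haveI : IsFiniteMeasure ν' := inferInstance
  have hν'pos : 0 < ν' Set.univ := by
    rw [hν'_def, Measure.restrict_apply_univ]
    exact hx1pos B (mem_nhdsWithin_of_mem_nhds (ball_mem_nhds x1 hr))
  have hν'B : ν' Bᶜ = 0 := by
    rw [hν'_def, Measure.restrict_apply measurableSet_ball.compl]
    rw [Set.compl_inter_self, measure_empty]
  have hν'le2 : ν' ≤ μ2 := le_trans Measure.restrict_le_self hνle2
  -- the graph maps and graph measures
  set g1 : (EuclideanSpace ℝ (Fin d)) → (EuclideanSpace ℝ (Fin d)) × (EuclideanSpace ℝ (Fin m)) := fun x => (x, lam1' x) with hg1_def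
  set g2 : (EuclideanSpace ℝ (Fin d)) → (EuclideanSpace ℝ (Fin d)) × (EuclideanSpace ℝ (Fin m)) := fun x => (x, lam2' x) with hg2_def
  have hg1m : Measurable g1 := measurable_id.prodMk hlam1m
  have hg2m : Measurable g2 := measurable_id.prodMk hlam2m
  set σ1 : Measure ((EuclideanSpace ℝ (Fin d)) × (EuclideanSpace ℝ (Fin m))) := ν'.map g1 with hσ1_def
  set σ2 : Measure ((EuclideanSpace ℝ (Fin d)) × (EuclideanSpace ℝ (Fin m))) := ν'.map g2 with hσ2_def
  have hσ1fst : σ1.map Prod.fst = ν' := by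
    rw [hσ1_def, Measure.map_map measurable_fst hg1m]
    have : (Prod.fst ∘ g1) = id := rfl
    rw [this, Measure.map_id]
  have hσ2fst : σ2.map Prod.fst = ν' := by
    rw [hσ2_def, Measure.map_map measurable_fst hg2m]
    have : (Prod.fst ∘ g2) = id := rfl
    rw [this, Measure.map_id]
  have hσ1univ : σ1 Set.univ = ν' Set.univ := by
    rw [hσ1_def, Measure.map_apply hg1m MeasurableSet.univ]; simp
  have hσ2univ : σ2 Set.univ = ν' Set.univ := by
    rw [hσ2_def, Measure.map_apply hg2m MeasurableSet.univ]; simp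
  haveI hσ1fin : IsFiniteMeasure σ1 := ⟨by rw [hσ1univ]; exact measure_lt_top ν' _⟩
  haveI hσ2fin : IsFiniteMeasure σ2 := ⟨by rw [hσ2univ]; exact measure_lt_top ν' _⟩
  -- σ2 ≤ π
  set G2 : Set ((EuclideanSpace ℝ (Fin d)) × (EuclideanSpace ℝ (Fin m))) := {p | p.1 ∈ s ∧ p.2 = lam2 p.1} with hG2_def
  have hG2eq : G2 = (Prod.fst ⁻¹' s) ∩ {p : (EuclideanSpace ℝ (Fin d)) × (EuclideanSpace ℝ (Fin m)) | p.2 = lam2' p.1} := by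
    ext p
    simp only [hG2_def, Set.mem_setOf_eq, Set.mem_inter_iff, Set.mem_preimage]
    exact and_congr_right fun h1 => by rw [hlam2'eq p.1 h1]
  have hG2meas : MeasurableSet G2 := by
    rw [hG2eq]
    exact (measurable_fst measurableSet_ball).inter
      (measurable_snd.stronglyMeasurable.measurableSet_eq_fun
        (hlam2m.comp measurable_fst).stronglyMeasurable)
  have hπG2 : ((π.restrict G2).map Prod.fst).map g2 = π.restrict G2 := by
    rw [Measure.map_map hg2m measurable_fst]
    have hae : (g2 ∘ Prod.fst) =ᵐ[π.restrict G2] id := by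
      filter_upwards [ae_restrict_mem hG2meas] with p hp
      have : lam2' p.1 = p.2 := by rw [hlam2'eq p.1 hp.1]; exact hp.2.symm
      exact Prod.ext rfl this
    rw [Measure.map_congr hae, Measure.map_id]
  have hσ2le : σ2 ≤ π := by
    calc σ2 = ν'.map g2 := hσ2_def
      _ ≤ μ2.map g2 := Measure.map_mono hν'le2 hg2m
      _ = π.restrict G2 := by rw [hμ2]; exact hπG2
      _ ≤ π := Measure.restrict_le_self
  -- the perturbed plan π'
  set ρ : Measure ((EuclideanSpace ℝ (Fin d)) × (EuclideanSpace ℝ (Fin m))) := π - σ2 with hρ_def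
  have hρadd : ρ + σ2 = π := Measure.sub_add_cancel_of_le hσ2le
  haveI hρfin : IsFiniteMeasure ρ := isFiniteMeasure_of_le π Measure.sub_le
  set π' : Measure ((EuclideanSpace ℝ (Fin d)) × (EuclideanSpace ℝ (Fin m))) := ρ + σ1 with hπ'_def
  haveI hπ'prob : IsProbabilityMeasure π' := by
    constructor
    have : π' Set.univ = ρ Set.univ + σ1 Set.univ := by
      rw [hπ'_def]; simp [Measure.add_apply]
    rw [this, hσ1univ, ← hσ2univ]
    have : ρ Set.univ + σ2 Set.univ = π Set.univ := by
      rw [← Measure.add_apply, hρadd]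
    rw [this, measure_univ]
  have hπ'marg : π'.map Prod.fst = μ := by
    rw [hπ'_def, Measure.map_add _ _ measurable_fst, hσ1fst, ← hσ2fst,
      ← Measure.map_add _ _ measurable_fst, hρadd, hπmarg]
  -- inner-integral measurability
  have hinner_sm : StronglyMeasurable fun p : (EuclideanSpace ℝ (Fin d)) × (EuclideanSpace ℝ (Fin m)) => ∫ q, cFun (p, q) ∂π :=
    hcFun_cont.stronglyMeasurable.integral_prod_right'
  -- evaluation of the linear terms
  have hL : ∀ (lam' : (EuclideanSpace ℝ (Fin d)) → (EuclideanSpace ℝ (Fin m))) (g : (EuclideanSpace ℝ (Fin d)) → (EuclideanSpace ℝ (Fin d)) × (EuclideanSpace ℝ (Fin m))), Measurable g → (g = fun x => (x, lam' x)) →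
      IsFiniteMeasure (ν'.map g) →
      ∫ z, cFun z ∂((ν'.map g).prod π) = ∫ x, (∫ q, c (x, lam' x) q ∂π) ∂ν' := by
    intro lam' g hgm hg_eq hgfin
    haveI := hgfin
    rw [integral_prod _ (hInt _ inferInstance)]
    rw [integral_map hgm.aemeasurable]
    · subst hg_eq; rfl
    · exact (hinner_sm.comp_measurable measurable_id).aestronglyMeasurable
  have hL1 : ∫ z, cFun z ∂(σ1.prod π) = ∫ x, (∫ q, c (x, lam1' x) q ∂π) ∂ν' := by
    rw [hσ1_def]; exact hL lam1' g1 hg1m hg1_def hσ1fin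
  have hL2 : ∫ z, cFun z ∂(σ2.prod π) = ∫ x, (∫ q, c (x, lam2' x) q ∂π) ∂ν' := by
    rw [hσ2_def]; exact hL lam2' g2 hg2m hg2_def hσ2fin
  have hLeq : ∫ z, cFun z ∂(σ1.prod π) = ∫ z, cFun z ∂(σ2.prod π) := by
    rw [hL1, hL2]
    apply integral_congr_ae
    have hmem : ∀ᵐ x ∂ν', x ∈ B := by rw [hν'_def]; exact ae_restrict_mem measurableSet_ball
    filter_upwards [hmem] with x hx
    have hxs : x ∈ s := hBs hx
    rw [hlam1'eq x hxs, hlam2'eq x hxs]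
    exact le_antisymm (hmin1 x hxs (lam2 x)) (hmin2 x hxs (lam1 x))
  -- evaluation of the quadratic terms
  have hK : ∀ (lamA lamB : (EuclideanSpace ℝ (Fin d)) → (EuclideanSpace ℝ (Fin m))) (gA gB : (EuclideanSpace ℝ (Fin d)) → (EuclideanSpace ℝ (Fin d)) × (EuclideanSpace ℝ (Fin m))), Measurable gA → Measurable gB →
      (gA = fun x => (x, lamA x)) → (gB = fun x => (x, lamB x)) →
      ∫ z, cFun z ∂((ν'.map gA).prod (ν'.map gB)) =
        ∫ z : (EuclideanSpace ℝ (Fin d)) × (EuclideanSpace ℝ (Fin d)), ct z.1 z.2 (‖lamA z.1 - lamB z.2‖ ^ 2) ∂(ν'.prod ν') := by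
    intro lamA lamB gA gB hgAm hgBm hgA hgB
    rw [Measure.map_prod_map _ _ hgAm hgBm,
      integral_map ((hgAm.prodMap hgBm).aemeasurable) hcFun_cont.aestronglyMeasurable]
    subst hgA hgB
    simp only [hcFun_eq, Prod.map]
  have hmeasK : ∀ (lamA lamB : (EuclideanSpace ℝ (Fin d)) → (EuclideanSpace ℝ (Fin m))), Measurable lamA → Measurable lamB →
      Integrable (fun z : (EuclideanSpace ℝ (Fin d)) × (EuclideanSpace ℝ (Fin d)) => ct z.1 z.2 (‖lamA z.1 - lamB z.2‖ ^ 2)) (ν'.prod ν') := by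
    intro lamA lamB hA hB
    apply stmt16_integrable _ _ (fun z => hC _ _ _)
    apply Measurable.aestronglyMeasurable
    exact hct_cont.measurable.comp (measurable_fst.prodMk (measurable_snd.prodMk
      (((hA.comp measurable_fst).sub (hB.comp measurable_snd)).norm.pow measurable_const)))
  have hK11 := hK lam1' lam1' g1 g1 hg1m hg1m hg1_def hg1_def
  have hK22 := hK lam2' lam2' g2 g2 hg2m hg2m hg2_def hg2_def
  have hK12 := hK lam1' lam2' g1 g2 hg1m hg2m hg1_def hg2_def
  have hK21 := hK lam2' lam1' g2 g1 hg2m hg1m hg2_def hg1_def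
  have hQeq : (∫ z, cFun z ∂(σ1.prod σ1)) + (∫ z, cFun z ∂(σ2.prod σ2))
      - (∫ z, cFun z ∂(σ1.prod σ2)) - (∫ z, cFun z ∂(σ2.prod σ1))
      = ∫ z, F z ∂(ν'.prod ν') := by
    have hA := hmeasK _ _ hlam1m hlam1m
    have hB := hmeasK _ _ hlam2m hlam2m
    have hCm := hmeasK _ _ hlam1m hlam2m
    have hD := hmeasK _ _ hlam2m hlam1m
    rw [hσ1_def, hσ2_def, hK11, hK22, hK12, hK21]
    symm
    simp only [hF_def]
    have hAB : Integrable (fun z : (EuclideanSpace ℝ (Fin d)) × (EuclideanSpace ℝ (Fin d)) =>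
        ct z.1 z.2 (‖lam1' z.1 - lam1' z.2‖ ^ 2) + ct z.1 z.2 (‖lam2' z.1 - lam2' z.2‖ ^ 2))
        (ν'.prod ν') := hA.add hB
    have hABC : Integrable (fun z : (EuclideanSpace ℝ (Fin d)) × (EuclideanSpace ℝ (Fin d)) =>
        ct z.1 z.2 (‖lam1' z.1 - lam1' z.2‖ ^ 2) + ct z.1 z.2 (‖lam2' z.1 - lam2' z.2‖ ^ 2)
          - ct z.1 z.2 (‖lam1' z.1 - lam2' z.2‖ ^ 2)) (ν'.prod ν') := hAB.sub hCm
    rw [integral_sub hABC hD, integral_sub hAB hCm, integral_add hA hB]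
  -- the quadratic term is strictly negative
  have hFint : Integrable F (ν'.prod ν') := by
    have := (((hmeasK _ _ hlam1m hlam1m).add (hmeasK _ _ hlam2m hlam2m)).sub
      (hmeasK _ _ hlam1m hlam2m)).sub (hmeasK _ _ hlam2m hlam1m)
    exact this
  have hQneg : ∫ z, F z ∂(ν'.prod ν') < 0 := by
    have hae_mem : ∀ᵐ z ∂(ν'.prod ν'), z.1 ∈ B ∧ z.2 ∈ B := by
      rw [MeasureTheory.ae_iff]
      have hnull : (ν'.prod ν') ((Bᶜ ×ˢ Set.univ) ∪ (Set.univ ×ˢ Bᶜ)) = 0 := by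
        apply measure_union_null <;> rw [Measure.prod_prod] <;> simp [hν'B]
      refine measure_mono_null (fun z hz => ?_) hnull
      simp only [Set.mem_setOf_eq, not_and_or] at hz
      rcases hz with h | h
      · exact Or.inl ⟨h, Set.mem_univ _⟩
      · exact Or.inr ⟨Set.mem_univ _, h⟩
    have hle : ∫ z, F z ∂(ν'.prod ν') ≤ ∫ _, ε0 ∂(ν'.prod ν') := by
      apply integral_mono_ae hFint (integrable_const ε0)
      filter_upwards [hae_mem] with z hz
      exact (hFB z ⟨hz.1, hz.2⟩).le
    have hmass : 0 < ((ν'.prod ν') Set.univ).toReal := by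
      rw [← Set.univ_prod_univ, Measure.prod_prod]
      apply ENNReal.toReal_pos
      · exact (ENNReal.mul_pos hν'pos.ne' hν'pos.ne').ne'
      · exact (ENNReal.mul_lt_top (measure_lt_top _ _) (measure_lt_top _ _)).ne
    rw [integral_const, smul_eq_mul] at hle
    exact lt_of_le_of_lt hle (mul_neg_of_pos_of_neg hmass hε0neg)
  -- expansion of the two costs
  have hsymmF : ∀ a b : (EuclideanSpace ℝ (Fin d)) × (EuclideanSpace ℝ (Fin m)), cFun (a, b) = cFun (b, a) := fun a b => csymm a b
  have hswap : ∀ (α β : Measure ((EuclideanSpace ℝ (Fin d)) × (EuclideanSpace ℝ (Fin m)))), IsFiniteMeasure α → IsFiniteMeasure β →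
      ∫ z, cFun z ∂(α.prod β) = ∫ z, cFun z ∂(β.prod α) := fun α β hα hβ => by
    haveI := hα; haveI := hβ
    exact stmt16_J_swap α β hsymmF
  have hexp : ∀ τ : Measure ((EuclideanSpace ℝ (Fin d)) × (EuclideanSpace ℝ (Fin m))), IsFiniteMeasure τ →
      ∫ z, cFun z ∂((ρ + τ).prod (ρ + τ)) =
        (∫ z, cFun z ∂(ρ.prod ρ)) + (∫ z, cFun z ∂(ρ.prod τ)) +
        ((∫ z, cFun z ∂(τ.prod ρ)) + (∫ z, cFun z ∂(τ.prod τ))) := by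
    intro τ hτ
    haveI := τ
    haveI : IsFiniteMeasure τ := hτ
    rw [stmt16_J_add_left ρ τ (ρ + τ) hInt, stmt16_J_add_right ρ ρ τ hInt,
      stmt16_J_add_right τ ρ τ hInt]
  have hπdecomp : ∀ β : Measure ((EuclideanSpace ℝ (Fin d)) × (EuclideanSpace ℝ (Fin m))), IsFiniteMeasure β →
      ∫ z, cFun z ∂(π.prod β) = (∫ z, cFun z ∂(ρ.prod β)) + ∫ z, cFun z ∂(σ2.prod β) := by
    intro β hβ
    haveI : IsFiniteMeasure β := hβ
    rw [← hρadd, stmt16_J_add_left ρ σ2 β hInt]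
  -- put everything together
  have hπν : ∫ z, cFun z ∂(π'.prod π') < ∫ z, cFun z ∂(π.prod π) := by
    have e1 : ∫ z, cFun z ∂(π'.prod π') =
        (∫ z, cFun z ∂(ρ.prod ρ)) + (∫ z, cFun z ∂(ρ.prod σ1)) +
        ((∫ z, cFun z ∂(σ1.prod ρ)) + ∫ z, cFun z ∂(σ1.prod σ1)) := by
      rw [hπ'_def]; exact hexp σ1 hσ1fin
    have e2 : ∫ z, cFun z ∂(π.prod π) =
        (∫ z, cFun z ∂(ρ.prod ρ)) + (∫ z, cFun z ∂(ρ.prod σ2)) +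
        ((∫ z, cFun z ∂(σ2.prod ρ)) + ∫ z, cFun z ∂(σ2.prod σ2)) := by
      rw [← hρadd]; exact hexp σ2 hσ2fin
    have s1 : ∫ z, cFun z ∂(ρ.prod σ1) = ∫ z, cFun z ∂(σ1.prod ρ) :=
      hswap ρ σ1 hρfin hσ1fin
    have s2 : ∫ z, cFun z ∂(ρ.prod σ2) = ∫ z, cFun z ∂(σ2.prod ρ) :=
      hswap ρ σ2 hρfin hσ2fin
    have d1 : ∫ z, cFun z ∂(π.prod σ1) =
        (∫ z, cFun z ∂(ρ.prod σ1)) + ∫ z, cFun z ∂(σ2.prod σ1) := hπdecomp σ1 hσ1fin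
    have d2 : ∫ z, cFun z ∂(π.prod σ2) =
        (∫ z, cFun z ∂(ρ.prod σ2)) + ∫ z, cFun z ∂(σ2.prod σ2) := hπdecomp σ2 hσ2fin
    have t1 : ∫ z, cFun z ∂(π.prod σ1) = ∫ z, cFun z ∂(σ1.prod π) :=
      hswap π σ1 inferInstance hσ1fin
    have t2 : ∫ z, cFun z ∂(π.prod σ2) = ∫ z, cFun z ∂(σ2.prod π) :=
      hswap π σ2 inferInstance hσ2fin
    have s12 : ∫ z, cFun z ∂(σ2.prod σ1) = ∫ z, cFun z ∂(σ1.prod σ2) :=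
      hswap σ2 σ1 hσ2fin hσ1fin
    have hQ : (∫ z, cFun z ∂(σ1.prod σ1)) + (∫ z, cFun z ∂(σ2.prod σ2))
        - (∫ z, cFun z ∂(σ1.prod σ2)) - (∫ z, cFun z ∂(σ2.prod σ1)) < 0 := by
      rw [hQeq]; exact hQneg
    have hlin : ∫ z, cFun z ∂(σ1.prod π) = ∫ z, cFun z ∂(σ2.prod π) := hLeq
    linarith
  have hfinal := hopt π' hπ'prob hπ'marg
  have hid1 : (∫ pq, c pq.1 pq.2 ∂(π.prod π)) = ∫ z, cFun z ∂(π.prod π) := rfl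
  have hid2 : (∫ pq, c pq.1 pq.2 ∂(π'.prod π')) = ∫ z, cFun z ∂(π'.prod π') := rfl
  rw [hid1, hid2] at hfinal
  linarith
end
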